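/- Suppose f(x) = (1/n) Σ_{i=1}^n f_i(x) is β-smooth and μ-PL with β ≥ μ > 0, each f_i is differentiable with ‖∇f_i(x)‖ ≤ σ for all i and x, and p < 1. Consider the iteration x_{t+1} = x_t - γ ĝ(x_t) with step size γ = (1-p)/β, where ĝ(x) = g(x)/(1-p), g(x) = (1/n) Σ_{i=1}^{n/c} Y_i^{(t)} g[i](x), g[i](x) = Σ_{j=1}^c ∇f_{c(i-1)+j}(x), and at each iteration the block indicators Y^{(t)} are induced by an independent uniformly random r-subset of the k workers (partitioned into n/c blocks of size ℓ = kc/n, 2ℓ ≤ k). Then Δ_T := E[f(x_T) - f*] satisfies Δ_T ≤ (1 - (1-p)μ/β)^T Δ_0 + (q-p)cσ²/(2(1-p)μn). -/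

import Mathlib

/-!
Averaging over the `C(k,r)` equally likely non-straggler sets, inclusion–exclusion on the
events "block `i` is missed" gives `E[Yᵢ] = 1 - p` and `E[Yᵢ Yⱼ] = 1 - q` for `i ≠ j`. Hence the
decoded gradient `g(x)` has mean `(1-p)∇F(x)` and second moment at most
`(1-q)‖∇F(x)‖² + (q-p)cσ²/n`. With the effective step `1/β`, the `β`-smoothness descent
inequality, `q ≥ p` and the PL inequality give the one-step contraction
`E[F(x⁺) - f*] ≤ (1 - (1-p)μ/β)(F(x) - f*) + (q-p)cσ²/(2βn)`; unrolling it over the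
independent iterations and summing the geometric series gives the bound.
-/

open Finset

/-- The index `c*(i-1)+j` (0-indexed: `c*i + j`) of the `j`-th task in the `i`-th block. -/
def taskIdx (n c : ℕ) (hc : c ∣ n) (i : Fin (n / c)) (j : Fin c) : Fin n :=
  ⟨c * i.val + j.val, by
    calc c * i.val + j.val < c * i.val + c := Nat.add_lt_add_left j.isLt _
      _ = c * (i.val + 1) := (Nat.mul_succ c i.val).symm
      _ ≤ c * (n / c) := Nat.mul_le_mul (Nat.le_refl c) i.isLt
      _ = n := Nat.mul_div_cancel' hc⟩

/-- The trajectory obtained by starting at `x0` and, at step `t`, applying the update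
`upd (ω t)` determined by the non-straggler set `ω t` of that iteration. -/
def traj {k : ℕ} {E : Type*} (x0 : E) (upd : Finset (Fin k) → E → E)
    (ω : ℕ → Finset (Fin k)) : ℕ → E
  | 0 => x0
  | t + 1 => upd (ω t) (traj x0 upd ω t)

open Function
open scoped RealInnerProductSpace

lemma sum_taskIdx {n c : ℕ} (hc : c ∣ n) {M : Type*} [AddCommMonoid M] (g : Fin n → M) :
    ∑ i : Fin (n / c), ∑ j : Fin c, g (taskIdx n c hc i j) = ∑ m : Fin n, g m := by
  rw [← Fintype.sum_prod_type']
  exact Fintype.sum_equiv (finProdFinEquiv.trans (finCongr (Nat.div_mul_cancel hc))) _ _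
    fun ij => congrArg g (Fin.ext (by simp [taskIdx, finProdFinEquiv, add_comm]))

lemma sum_piFinset_succ {A M : Type*} [DecidableEq A] [AddCommMonoid M] (s : Finset A) (T : ℕ)
    (h : (Fin (T + 1) → A) → M) :
    ∑ ω ∈ Fintype.piFinset (fun _ : Fin (T + 1) => s), h ω
      = ∑ S ∈ s, ∑ g ∈ Fintype.piFinset (fun _ : Fin T => s), h (Fin.cons S g) := by
  have hsplit := filter_piFinset_eq_map_consEquiv (fun _ : Fin (T + 1) => s) (fun _ => True)
  rw [filter_true] at hsplit
  rw [hsplit, sum_map, sum_product, filter_true]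
  rfl

section Trajectory

variable {k : ℕ} {E : Type*}

lemma traj_succ_eq_traj_shift (x0 : E) (upd : Finset (Fin k) → E → E)
    (ω : ℕ → Finset (Fin k)) (t : ℕ) :
    traj x0 upd ω (t + 1) = traj (upd (ω 0) x0) upd (fun s => ω (s + 1)) t := by
  induction t with
  | zero => rfl
  | succ t ih => exact congrArg (upd (ω (t + 1))) ih

lemma traj_congr (x0 : E) (upd : Finset (Fin k) → E → E) {ω ω' : ℕ → Finset (Fin k)} {t : ℕ}
    (h : ∀ s < t, ω s = ω' s) : traj x0 upd ω t = traj x0 upd ω' t := by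
  induction t with
  | zero => rfl
  | succ t ih =>
    simp only [traj]
    rw [h t t.lt_succ_self, ih fun s hs => h s (Nat.lt_succ_of_lt hs)]

def extendSchedule {T : ℕ} (ω : Fin T → Finset (Fin k)) : ℕ → Finset (Fin k) :=
  fun t => if h : t < T then ω ⟨t, h⟩ else ∅

lemma traj_extendSchedule_cons (x : E) (upd : Finset (Fin k) → E → E) {T : ℕ}
    (S : Finset (Fin k)) (ω : Fin T → Finset (Fin k)) :
    traj x upd (extendSchedule (Fin.cons S ω : Fin (T + 1) → Finset (Fin k))) (T + 1)
      = traj (upd S x) upd (extendSchedule ω) T := by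
  rw [traj_succ_eq_traj_shift]
  refine traj_congr _ _ fun s hs => ?_
  simp only [extendSchedule, Nat.succ_lt_succ hs, hs, dif_pos]
  exact Fin.cons_succ (α := fun _ => Finset (Fin k)) S ω ⟨s, hs⟩

lemma sum_piFinset_traj_le (D : Finset (Finset (Fin k))) (upd : Finset (Fin k) → E → E)
    (φ : E → ℝ) {ρ B : ℝ} (hρ : 0 ≤ ρ)
    (hstep : ∀ x, ∑ S ∈ D, φ (upd S x) ≤ #D * (ρ * φ x + B)) (T : ℕ) (x : E) :
    ∑ ω ∈ Fintype.piFinset (fun _ : Fin T => D), φ (traj x upd (extendSchedule ω) T)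
      ≤ (#D : ℝ) ^ T * (ρ ^ T * φ x + B * ∑ i ∈ range T, ρ ^ i) := by
  induction T generalizing x with
  | zero => simp [traj]
  | succ T ih =>
    rw [sum_piFinset_succ]
    simp only [traj_extendSchedule_cons]
    calc ∑ S ∈ D, ∑ ω ∈ Fintype.piFinset (fun _ : Fin T => D),
          φ (traj (upd S x) upd (extendSchedule ω) T)
        ≤ ∑ S ∈ D, (#D : ℝ) ^ T * (ρ ^ T * φ (upd S x) + B * ∑ i ∈ range T, ρ ^ i) :=
          sum_le_sum fun S _ => ih (upd S x)
      _ = (#D : ℝ) ^ T * ρ ^ T * ∑ S ∈ D, φ (upd S x)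
            + (#D : ℝ) ^ (T + 1) * (B * ∑ i ∈ range T, ρ ^ i) := by
          simp only [mul_add, sum_add_distrib, ← mul_sum, sum_const, nsmul_eq_mul]
          ring
      _ ≤ (#D : ℝ) ^ T * ρ ^ T * (#D * (ρ * φ x + B))
            + (#D : ℝ) ^ (T + 1) * (B * ∑ i ∈ range T, ρ ^ i) := by
          gcongr
          exact hstep x
      _ = (#D : ℝ) ^ (T + 1) * (ρ ^ (T + 1) * φ x + B * ∑ i ∈ range (T + 1), ρ ^ i) := by
          rw [sum_range_succ]
          ring

lemma sum_piFinset_traj_div_le (D : Finset (Finset (Fin k))) (hD : D.Nonempty)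
    (upd : Finset (Fin k) → E → E) (φ : E → ℝ) {ρ B : ℝ} (hρ₀ : 0 ≤ ρ) (hρ₁ : ρ < 1) (hB : 0 ≤ B)
    (hstep : ∀ x, ∑ S ∈ D, φ (upd S x) ≤ #D * (ρ * φ x + B)) (T : ℕ) (x : E) :
    (∑ ω ∈ Fintype.piFinset (fun _ : Fin T => D), φ (traj x upd (extendSchedule ω) T)) / #D ^ T
      ≤ ρ ^ T * φ x + B / (1 - ρ) := by
  rw [div_le_iff₀ (pow_pos (Nat.cast_pos.2 hD.card_pos) T)]
  refine (sum_piFinset_traj_le D upd φ hρ₀ hstep T x).trans ?_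
  rw [mul_comm, div_eq_mul_inv]
  gcongr
  simpa [← range_eq_Ico] using geom_sum_Ico_le_of_lt_one (m := 0) (n := T) hρ₀ hρ₁

end Trajectory

section Descent

variable {E : Type*} [NormedAddCommGroup E] [InnerProductSpace ℝ E]

lemma gradient_const_mul_sum [CompleteSpace E] {ι : Type*} [Fintype ι] (a : ℝ)
    {f : ι → E → ℝ} (hf : ∀ i, Differentiable ℝ (f i)) (x : E) :
    gradient (fun y => a * ∑ i, f i y) x = a • ∑ i, gradient (f i) x := by
  refine HasGradientAt.gradient ?_
  rw [hasGradientAt_iff_hasFDerivAt, map_smul, map_sum]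
  exact (HasFDerivAt.fun_sum fun i _ =>
    hasGradientAt_iff_hasFDerivAt.mp (hf i x).hasGradientAt).const_mul a

lemma sum_norm_sq_sum_smul {ι κ : Type*} [Fintype ι] (D : Finset κ) (Y : κ → ι → ℝ)
    (v : ι → E) {a b : ℝ} (hoff : ∀ i j, i ≠ j → ∑ S ∈ D, Y S i * Y S j = a)
    (hdiag : ∀ i, ∑ S ∈ D, Y S i * Y S i = b) :
    ∑ S ∈ D, ‖∑ i, Y S i • v i‖ ^ 2 = a * ‖∑ i, v i‖ ^ 2 + (b - a) * ∑ i, ‖v i‖ ^ 2 := by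
  classical
  have hcoef : ∀ i j, ∑ S ∈ D, Y S i * Y S j = a + if i = j then b - a else 0 := by
    intro i j
    by_cases hij : i = j
    · subst hij; simp [hdiag]
    · simp [hoff i j hij, hij]
  calc ∑ S ∈ D, ‖∑ i, Y S i • v i‖ ^ 2
      = ∑ i, ∑ j, (∑ S ∈ D, Y S i * Y S j) * ⟪v i, v j⟫ := by
        simp only [← real_inner_self_eq_norm_sq, sum_inner, inner_sum, real_inner_smul_left,
          real_inner_smul_right, sum_mul]
        rw [sum_comm]
        refine sum_congr rfl fun i _ => ?_
        rw [sum_comm]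
        exact sum_congr rfl fun j _ => sum_congr rfl fun S _ => by rw [real_inner_comm]; ring
    _ = a * ‖∑ i, v i‖ ^ 2 + (b - a) * ∑ i, ‖v i‖ ^ 2 := by
        simp only [hcoef, add_mul, sum_add_distrib, ite_mul, zero_mul, sum_ite_eq, mem_univ,
          if_true, ← mul_sum, real_inner_self_eq_norm_sq]
        rw [← real_inner_self_eq_norm_sq, sum_inner]
        simp only [inner_sum]

/-- Sums over `D` stand for `#D` times expectations over a uniformly random `S ∈ D`. -/
lemma sum_sub_le_of_smooth_of_PL [CompleteSpace E] {κ : Type*} {F : E → ℝ}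
    {β μ fstar η a b V : ℝ} {x : E}
    (hsmooth : ∀ y, F y ≤ F x + ⟪gradient F x, y - x⟫ + (β / 2) * ‖y - x‖ ^ 2)
    (hPL : μ * (F x - fstar) ≤ (1 / 2) * ‖gradient F x‖ ^ 2)
    (D : Finset κ) (G : κ → E) (hmean : ∑ S ∈ D, G S = ((#D : ℝ) * a) • gradient F x)
    (hvar : ∑ S ∈ D, ‖G S‖ ^ 2 ≤ #D * (b * ‖gradient F x‖ ^ 2 + V))
    (hβ : 0 ≤ β) (hη : 0 ≤ η) (ha : 0 ≤ a) (hab : β * η * b ≤ a) :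
    ∑ S ∈ D, (F (x - η • G S) - fstar)
      ≤ #D * ((1 - η * a * μ) * (F x - fstar) + β * η ^ 2 * V / 2) := by
  set N : ℝ := (#D : ℝ)
  set g := gradient F x
  have hstep : ∀ S, F (x - η • G S) - fstar
      ≤ F x - fstar - η * ⟪g, G S⟫ + β / 2 * η ^ 2 * ‖G S‖ ^ 2 := fun S => by
    have := hsmooth (x - η • G S)
    rw [sub_sub_cancel_left, inner_neg_right, norm_neg, real_inner_smul_right, norm_smul,
      Real.norm_eq_abs, abs_of_nonneg hη, mul_pow] at this
    linarith
  have hN : 0 ≤ N := Nat.cast_nonneg _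
  calc ∑ S ∈ D, (F (x - η • G S) - fstar)
      ≤ ∑ S ∈ D, (F x - fstar - η * ⟪g, G S⟫ + β / 2 * η ^ 2 * ‖G S‖ ^ 2) :=
        sum_le_sum fun S _ => hstep S
    _ = N * (F x - fstar) - η * (N * a * ‖g‖ ^ 2) + β / 2 * η ^ 2 * ∑ S ∈ D, ‖G S‖ ^ 2 := by
        rw [sum_add_distrib, sum_sub_distrib, sum_const, nsmul_eq_mul, ← mul_sum, ← mul_sum,
          ← inner_sum, hmean, real_inner_smul_right, real_inner_self_eq_norm_sq]
    _ ≤ N * (F x - fstar) - η * (N * a * ‖g‖ ^ 2)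
          + β / 2 * η ^ 2 * (N * (b * ‖g‖ ^ 2 + V)) := by
        gcongr
    _ ≤ N * ((1 - η * a * μ) * (F x - fstar) + β * η ^ 2 * V / 2) := by
        nlinarith [mul_nonneg (mul_nonneg (mul_nonneg hN hη) (sub_nonneg.2 hab)) (sq_nonneg ‖g‖),
          mul_nonneg (mul_nonneg (mul_nonneg hN hη) ha) (sub_nonneg.2 hPL)]

end Descent

section Hits

variable {α : Type*} [DecidableEq α]

/-- `hits S (W i)` is the paper's block indicator `Yᵢ`. -/
def hits (S W : Finset α) : ℝ := if (S ∩ W).Nonempty then 1 else 0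

lemma hits_mul_self (S W : Finset α) : hits S W * hits S W = hits S W := by
  unfold hits; split_ifs <;> norm_num

lemma hits_union (S W₁ W₂ : Finset α) :
    hits S (W₁ ∪ W₂) = hits S W₁ + hits S W₂ - hits S W₁ * hits S W₂ := by
  simp only [hits, inter_union_distrib_left, union_nonempty]
  split_ifs <;> simp_all

lemma card_powersetCard_filter_disjoint [Fintype α] (r : ℕ) (W : Finset α) :
    #{S ∈ powersetCard r univ | Disjoint S W} = (Fintype.card α - #W).choose r := by
  rw [← card_compl, ← card_powersetCard]
  congr 1
  ext S
  simp [subset_compl_iff_disjoint_right, and_comm]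

lemma sum_hits [Fintype α] (r : ℕ) (W : Finset α) :
    ∑ S ∈ powersetCard r univ, hits S W
      = ((Fintype.card α).choose r : ℝ) - ((Fintype.card α - #W).choose r : ℝ) := by
  have h : ∀ S : Finset α, hits S W = 1 - if Disjoint S W then 1 else 0 := fun S => by
    simp only [hits, disjoint_iff_inter_eq_empty, ← not_nonempty_iff_eq_empty]
    split_ifs <;> norm_num
  simp only [h, sum_sub_distrib, sum_boole, card_powersetCard_filter_disjoint]
  simp

lemma sum_hits_mul_hits [Fintype α] (r : ℕ) {W₁ W₂ : Finset α} (hW : Disjoint W₁ W₂) :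
    ∑ S ∈ powersetCard r univ, hits S W₁ * hits S W₂
      = ((Fintype.card α).choose r : ℝ) - ((Fintype.card α - #W₁).choose r : ℝ)
        - ((Fintype.card α - #W₂).choose r : ℝ)
        + ((Fintype.card α - (#W₁ + #W₂)).choose r : ℝ) := by
  have h : ∀ S, hits S W₁ * hits S W₂ = hits S W₁ + hits S W₂ - hits S (W₁ ∪ W₂) :=
    fun S => by rw [hits_union]; ring
  simp only [h, sum_sub_distrib, sum_add_distrib, sum_hits, card_union_of_disjoint hW]
  ring

section WeightedSums

variable [Fintype α] {ι : Type*} [Fintype ι] {W : ι → Finset α} {ℓ : ℕ}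

lemma sum_sum_hits_smul {M : Type*} [AddCommGroup M] [Module ℝ M] (r : ℕ)
    (hW : ∀ i, #(W i) = ℓ) (v : ι → M) :
    ∑ S ∈ powersetCard r univ, ∑ i, hits S (W i) • v i
      = (((Fintype.card α).choose r : ℝ) - ((Fintype.card α - ℓ).choose r : ℝ)) • ∑ i, v i := by
  rw [sum_comm, smul_sum]
  simp only [← sum_smul, sum_hits, hW]

lemma sum_norm_sq_sum_hits_smul {E : Type*} [NormedAddCommGroup E] [InnerProductSpace ℝ E]
    (r : ℕ) (hW : ∀ i, #(W i) = ℓ) (hWd : Pairwise (Disjoint on W)) (v : ι → E) :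
    ∑ S ∈ powersetCard r univ, ‖∑ i, hits S (W i) • v i‖ ^ 2
      = (((Fintype.card α).choose r : ℝ) - 2 * ((Fintype.card α - ℓ).choose r : ℝ)
          + ((Fintype.card α - 2 * ℓ).choose r : ℝ)) * ‖∑ i, v i‖ ^ 2
        + (((Fintype.card α - ℓ).choose r : ℝ) - ((Fintype.card α - 2 * ℓ).choose r : ℝ))
          * ∑ i, ‖v i‖ ^ 2 := by
  rw [sum_norm_sq_sum_smul _ (fun S i => hits S (W i)) v
    (b := ((Fintype.card α).choose r : ℝ) - ((Fintype.card α - ℓ).choose r : ℝ))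
    (fun i j hij => by rw [sum_hits_mul_hits r (hWd hij), hW, hW, ← two_mul])
    (fun i => by simp only [hits_mul_self, sum_hits, hW])]
  ring

end WeightedSums

end Hits

section CodedGradient

variable {E : Type*} [NormedAddCommGroup E] [InnerProductSpace ℝ E] [CompleteSpace E]
  {n c : ℕ} (hc : c ∣ n)

/-- The paper's block gradient `g[i](x)`. -/
noncomputable def blockGrad (f : Fin n → E → ℝ) (i : Fin (n / c)) (x : E) : E :=
  ∑ j : Fin c, gradient (f (taskIdx n c hc i j)) x

/-- The paper's `g(x)` for the non-straggler set `S`. -/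
noncomputable def codedGrad {k : ℕ} (W : Fin (n / c) → Finset (Fin k)) (f : Fin n → E → ℝ)
    (S : Finset (Fin k)) (x : E) : E :=
  (1 / (n : ℝ)) • ∑ i, hits S (W i) • blockGrad hc f i x

variable {k ℓ : ℕ} {W : Fin (n / c) → Finset (Fin k)} {f : Fin n → E → ℝ}

lemma gradient_eq_smul_sum_blockGrad (hf : ∀ m, Differentiable ℝ (f m)) (x : E) :
    gradient (fun y => (1 / (n : ℝ)) * ∑ m, f m y) x
      = (1 / (n : ℝ)) • ∑ i, blockGrad hc f i x := by
  rw [gradient_const_mul_sum _ hf]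
  simp only [blockGrad, sum_taskIdx hc fun m => gradient (f m) x]

lemma sum_norm_sq_blockGrad_le {σ : ℝ} {x : E} (hσ : ∀ m, ‖gradient (f m) x‖ ≤ σ) :
    ∑ i, ‖blockGrad hc f i x‖ ^ 2 ≤ n * c * σ ^ 2 := by
  have hblock : ∀ i, ‖blockGrad hc f i x‖ ≤ c * σ := fun i =>
    (norm_sum_le _ _).trans
      (by simpa using sum_le_sum fun j (_ : j ∈ univ) => hσ (taskIdx n c hc i j))
  calc ∑ i, ‖blockGrad hc f i x‖ ^ 2 ≤ ∑ _i : Fin (n / c), ((c : ℝ) * σ) ^ 2 :=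
        sum_le_sum fun i _ => pow_le_pow_left₀ (norm_nonneg _) (hblock i) 2
    _ = ((n / c : ℕ) * c : ℕ) * c * σ ^ 2 := by simp; ring
    _ = n * c * σ ^ 2 := by rw [Nat.div_mul_cancel hc]

lemma sum_codedGrad (r : ℕ) (hW : ∀ i, #(W i) = ℓ) (hf : ∀ m, Differentiable ℝ (f m)) (x : E) :
    ∑ S ∈ powersetCard r univ, codedGrad hc W f S x
      = ((k.choose r : ℝ) - ((k - ℓ).choose r : ℝ))
          • gradient (fun y => (1 / (n : ℝ)) * ∑ m, f m y) x := by
  simp only [codedGrad, ← smul_sum, sum_sum_hits_smul r hW, Fintype.card_fin,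
    gradient_eq_smul_sum_blockGrad hc hf, smul_comm (1 / (n : ℝ))]

lemma sum_norm_sq_codedGrad_le (hn : n ≠ 0) (r : ℕ) (hW : ∀ i, #(W i) = ℓ)
    (hWd : Pairwise (Disjoint on W)) (hf : ∀ m, Differentiable ℝ (f m)) {σ : ℝ}
    (hσ : ∀ m x, ‖gradient (f m) x‖ ≤ σ) (x : E) :
    ∑ S ∈ powersetCard r univ, ‖codedGrad hc W f S x‖ ^ 2
      ≤ ((k.choose r : ℝ) - 2 * ((k - ℓ).choose r : ℝ) + ((k - 2 * ℓ).choose r : ℝ))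
          * ‖gradient (fun y => (1 / (n : ℝ)) * ∑ m, f m y) x‖ ^ 2
        + (((k - ℓ).choose r : ℝ) - ((k - 2 * ℓ).choose r : ℝ)) * (c * σ ^ 2 / n) := by
  set g := gradient (fun y => (1 / (n : ℝ)) * ∑ m, f m y) x with hg
  have hsum : ∑ i, blockGrad hc f i x = (n : ℝ) • g := by
    rw [hg, gradient_eq_smul_sum_blockGrad hc hf, smul_smul,
      mul_one_div_cancel (Nat.cast_ne_zero.2 hn), one_smul]
  have hchoose : ((k - 2 * ℓ).choose r : ℝ) ≤ (k - ℓ).choose r := by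
    exact_mod_cast Nat.choose_le_choose r (by omega)
  calc ∑ S ∈ powersetCard r univ, ‖codedGrad hc W f S x‖ ^ 2
      = (1 / (n : ℝ)) ^ 2
          * ∑ S ∈ powersetCard r univ, ‖∑ i, hits S (W i) • blockGrad hc f i x‖ ^ 2 := by
        simp only [codedGrad, norm_smul, mul_pow, ← mul_sum, Real.norm_eq_abs, sq_abs]
    _ ≤ (1 / (n : ℝ)) ^ 2 * (((k.choose r : ℝ) - 2 * ((k - ℓ).choose r : ℝ)
          + ((k - 2 * ℓ).choose r : ℝ)) * ‖(n : ℝ) • g‖ ^ 2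
          + (((k - ℓ).choose r : ℝ) - ((k - 2 * ℓ).choose r : ℝ)) * (n * c * σ ^ 2)) := by
        rw [sum_norm_sq_sum_hits_smul r hW hWd, Fintype.card_fin, hsum]
        gcongr
        exact sum_norm_sq_blockGrad_le hc fun m => hσ m x
    _ = _ := by
        rw [norm_smul, Real.norm_natCast]
        field_simp

end CodedGradient

lemma choose_div_le_two_mul_choose_sub_choose_div (k ℓ r : ℕ) :
    ((k - ℓ).choose r : ℝ) / k.choose r
      ≤ (2 * ((k - ℓ).choose r : ℝ) - ((k - 2 * ℓ).choose r : ℝ)) / k.choose r := by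
  have : ((k - 2 * ℓ).choose r : ℝ) ≤ (k - ℓ).choose r := by
    exact_mod_cast Nat.choose_le_choose r (by omega)
  exact div_le_div_of_nonneg_right (by linarith) (Nat.cast_nonneg _)

lemma erasurehead_sum_step_le {E : Type*} [NormedAddCommGroup E] [InnerProductSpace ℝ E]
    [CompleteSpace E] {n c k r ℓ : ℕ} (hn : n ≠ 0) (hc : c ∣ n) (hr : r ≤ k)
    {W : Fin (n / c) → Finset (Fin k)} (hW : ∀ i, #(W i) = ℓ) (hWd : Pairwise (Disjoint on W))
    {f : Fin n → E → ℝ} (hf : ∀ m, Differentiable ℝ (f m)) {σ β μ fstar p q : ℝ}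
    (hσ : ∀ m x, ‖gradient (f m) x‖ ≤ σ) (hβ : 0 < β) {F : E → ℝ}
    (hF : F = fun y => (1 / (n : ℝ)) * ∑ m, f m y)
    (hsmooth : ∀ x y, F y ≤ F x + ⟪gradient F x, y - x⟫ + (β / 2) * ‖y - x‖ ^ 2)
    (hPL : ∀ x, μ * (F x - fstar) ≤ (1 / 2) * ‖gradient F x‖ ^ 2)
    (hp : p = ((k - ℓ).choose r : ℝ) / (k.choose r : ℝ))
    (hq : q = (2 * ((k - ℓ).choose r : ℝ) - ((k - 2 * ℓ).choose r : ℝ)) / (k.choose r : ℝ))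
    (x : E) :
    ∑ S ∈ powersetCard r univ, (F (x - (1 / β) • codedGrad hc W f S x) - fstar)
      ≤ (k.choose r : ℝ) * ((1 - (1 - p) * μ / β) * (F x - fstar)
          + (q - p) * c * σ ^ 2 / (2 * β * n)) := by
  subst hF
  set g := gradient (fun y => (1 / (n : ℝ)) * ∑ m, f m y) x
  have hN : (k.choose r : ℝ) ≠ 0 := Nat.cast_ne_zero.2 (Nat.choose_pos hr).ne'
  have hNp : (k.choose r : ℝ) * p = (k - ℓ).choose r := by rw [hp]; field_simp
  have hNq : (k.choose r : ℝ) * q = 2 * ((k - ℓ).choose r : ℝ) - (k - 2 * ℓ).choose r := by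
    rw [hq]; field_simp
  have hp1 : p ≤ 1 := hp ▸ div_le_one_of_le₀ (mod_cast Nat.choose_le_choose r (k.sub_le ℓ))
    (Nat.cast_nonneg _)
  have hpq : p ≤ q := hp ▸ hq ▸ choose_div_le_two_mul_choose_sub_choose_div k ℓ r
  have hcard : (#(powersetCard r (univ : Finset (Fin k))) : ℝ) = k.choose r := by simp
  have hmean : ∑ S ∈ powersetCard r univ, codedGrad hc W f S x
      = ((#(powersetCard r (univ : Finset (Fin k))) : ℝ) * (1 - p)) • g := by
    rw [sum_codedGrad hc r hW hf, hcard, mul_one_sub, hNp]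
  have hvar : ∑ S ∈ powersetCard r univ, ‖codedGrad hc W f S x‖ ^ 2
      ≤ #(powersetCard r (univ : Finset (Fin k)))
          * ((1 - q) * ‖g‖ ^ 2 + (q - p) * (c * σ ^ 2 / n)) := by
    refine (sum_norm_sq_codedGrad_le hc hn r hW hWd hf hσ x).trans_eq ?_
    rw [hcard]
    linear_combination (‖g‖ ^ 2 - c * σ ^ 2 / n) * hNq + (c * σ ^ 2 / n) * hNp
  have key := sum_sub_le_of_smooth_of_PL (η := 1 / β) (hsmooth x) (hPL x) _ _ hmean hvar
    hβ.le (by positivity) (by linarith) (by field_simp; linarith)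
  rw [hcard] at key
  convert key using 3 <;> field_simp

theorem erasurehead_convergence_step_one_sub_p_over_beta_general
    {d n k c r ℓ T : ℕ} (hn : 0 < n) (hc : c ∣ n)
    (hr : r ≤ k)
    (W : Fin (n / c) → Finset (Fin k))
    (hWcard : ∀ i, (W i).card = ℓ)
    (hWdisj : ∀ i j, i ≠ j → Disjoint (W i) (W j))
    (f : Fin n → EuclideanSpace ℝ (Fin d) → ℝ)
    (hdiff : ∀ i, Differentiable ℝ (f i))
    (σ β μ fstar : ℝ) (hμ : 0 < μ) (hβμ : μ ≤ β)
    (hσ : ∀ i x, ‖gradient (f i) x‖ ≤ σ)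
    (F : EuclideanSpace ℝ (Fin d) → ℝ)
    (hF : F = fun y => (1 / (n : ℝ)) * ∑ i, f i y)
    (hsmooth : ∀ x y, F y ≤ F x + inner ℝ (gradient F x) (y - x) + (β / 2) * ‖y - x‖ ^ 2)
    (hPL : ∀ x, μ * (F x - fstar) ≤ (1 / 2) * ‖gradient F x‖ ^ 2)
    (p q : ℝ)
    (hp : p = ((k - ℓ).choose r : ℝ) / (k.choose r : ℝ))
    (hq : q = (2 * ((k - ℓ).choose r : ℝ) - ((k - 2 * ℓ).choose r : ℝ)) / (k.choose r : ℝ))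
    (hp1 : p < 1)
    (x0 : EuclideanSpace ℝ (Fin d))
    (X : (ℕ → Finset (Fin k)) → ℕ → EuclideanSpace ℝ (Fin d))
    (hX : X = fun ω => traj x0 (fun S x => x - ((1 - p) / β) • ((1 - p)⁻¹ •
        ((1 / (n : ℝ)) • ∑ i : Fin (n / c),
          (if (S ∩ W i).Nonempty then (1 : ℝ) else 0) •
            ∑ j : Fin c, gradient (f (taskIdx n c hc i j)) x)) ) ω)
    (ΔT : ℝ)
    (hΔT : ΔT = (∑ ω ∈ Fintype.piFinset
          (fun _ : Fin T => Finset.powersetCard r (Finset.univ : Finset (Fin k))),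
        (F (X (fun t => if h : t < T then ω ⟨t, h⟩ else ∅) T) - fstar))
      / ((k.choose r : ℝ)) ^ T) :
    ΔT ≤ (1 - (1 - p) * μ / β) ^ T * (F x0 - fstar)
      + (q - p) * c * σ ^ 2 / (2 * (1 - p) * μ * n) := by
  have hβ : 0 < β := hμ.trans_le hβμ
  have hp0 : 0 ≤ p := hp ▸ by positivity
  have hpq : p ≤ q := hp ▸ hq ▸ choose_div_le_two_mul_choose_sub_choose_div k ℓ r
  have hρ : 0 < (1 - p) * μ / β := by have := sub_pos.2 hp1; positivity
  have hρβ : (1 - p) * μ / β ≤ 1 := by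
    rw [div_le_one hβ]; nlinarith
  have hupd : (fun S x => x - ((1 - p) / β) • ((1 - p)⁻¹ • ((1 / (n : ℝ)) • ∑ i : Fin (n / c),
      (if (S ∩ W i).Nonempty then (1 : ℝ) else 0) •
        ∑ j : Fin c, gradient (f (taskIdx n c hc i j)) x)))
      = fun S x => x - (1 / β) • codedGrad hc W f S x := by
    funext S x
    have : (1 - p) / β * (1 - p)⁻¹ = 1 / β := by field_simp [(sub_pos.2 hp1).ne']
    rw [smul_smul, this]
    rfl
  have hD : (#(powersetCard r (univ : Finset (Fin k))) : ℝ) = k.choose r := by simp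
  have key := sum_piFinset_traj_div_le (powersetCard r univ)
    (powersetCard_nonempty.2 (by simpa using hr)) _ (fun x => F x - fstar) (by linarith)
    (by linarith) (by have := sub_nonneg.2 hpq; positivity)
    (fun x => hD ▸ erasurehead_sum_step_le hn.ne' hc hr hWcard (fun i j => hWdisj i j) hdiff hσ hβ
      hF hsmooth hPL hp hq x) T x0
  rw [hΔT, hX, hupd, ← hD]
  refine key.trans_eq ?_
  rw [sub_sub_cancel]
  field_simp

/-- Convergence of ErasureHead (FRC(n,k,c) approximate-gradient-coded gradient descent) with
step size `γ = (1-p)/β` on a `β`-smooth, `μ`-PL function: `Δ_T ≤ (1-(1-p)μ/β)^T Δ_0 +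
(q-p)cσ²/(2(1-p)μn)`. -/
theorem erasurehead_convergence_step_one_sub_p_over_beta
    {d n k c r ℓ T : ℕ} (hn : 0 < n) (hc : c ∣ n)
    (hr : r ≤ k) (hℓ : ℓ = k * c / n) (h2ℓ : 2 * ℓ ≤ k)
    (W : Fin (n / c) → Finset (Fin k))
    (hWcard : ∀ i, (W i).card = ℓ)
    (hWdisj : ∀ i j, i ≠ j → Disjoint (W i) (W j))
    (f : Fin n → EuclideanSpace ℝ (Fin d) → ℝ)
    (hdiff : ∀ i, Differentiable ℝ (f i))
    (σ β μ fstar : ℝ) (hμ : 0 < μ) (hβμ : μ ≤ β)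
    (hσ : ∀ i x, ‖gradient (f i) x‖ ≤ σ)
    (F : EuclideanSpace ℝ (Fin d) → ℝ)
    (hF : F = fun y => (1 / (n : ℝ)) * ∑ i, f i y)
    (hsmooth : ∀ x y, F y ≤ F x + inner ℝ (gradient F x) (y - x) + (β / 2) * ‖y - x‖ ^ 2)
    (hmin : ∀ x, fstar ≤ F x) (hattain : ∃ x, F x = fstar)
    (hPL : ∀ x, μ * (F x - fstar) ≤ (1 / 2) * ‖gradient F x‖ ^ 2)
    (p q : ℝ)
    (hp : p = ((k - ℓ).choose r : ℝ) / (k.choose r : ℝ))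
    (hq : q = (2 * ((k - ℓ).choose r : ℝ) - ((k - 2 * ℓ).choose r : ℝ)) / (k.choose r : ℝ))
    (hp1 : p < 1)
    (x0 : EuclideanSpace ℝ (Fin d))
    (X : (ℕ → Finset (Fin k)) → ℕ → EuclideanSpace ℝ (Fin d))
    (hX : X = fun ω => traj x0 (fun S x => x - ((1 - p) / β) • ((1 - p)⁻¹ •
        ((1 / (n : ℝ)) • ∑ i : Fin (n / c),
          (if (S ∩ W i).Nonempty then (1 : ℝ) else 0) •
            ∑ j : Fin c, gradient (f (taskIdx n c hc i j)) x)) ) ω)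
    (ΔT : ℝ)
    (hΔT : ΔT = (∑ ω ∈ Fintype.piFinset
          (fun _ : Fin T => Finset.powersetCard r (Finset.univ : Finset (Fin k))),
        (F (X (fun t => if h : t < T then ω ⟨t, h⟩ else ∅) T) - fstar))
      / ((k.choose r : ℝ)) ^ T) :
    ΔT ≤ (1 - (1 - p) * μ / β) ^ T * (F x0 - fstar)
      + (q - p) * c * σ ^ 2 / (2 * (1 - p) * μ * n) :=
  erasurehead_convergence_step_one_sub_p_over_beta_general hn hc hr W hWcard hWdisj f hdiff σ β μ
    fstar hμ hβμ hσ F hF hsmooth hPL p q hp hq hp1 x0 X hX ΔT hΔT
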